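/- arXiv:0707.0994 — 3 statements merged into one kernel-verified Lean document; each statement's English description precedes it below -/
import Mathlib

section
/- There exists an element ψ ∈ G(ℝ^d) such that ∫ψ(x)dx = 1 in R̃, ∫x^β ψ(x)dx = 0 in R̃ for every multi-index β with |β| ≥ 1, and supp ψ ⊆ {x∈ℝ^d : |x| ≤ 1}. Concretely: there exists a moderate net (ψ_ε)_ε of smooth functions ψ_ε ∈ C^∞(ℝ^d), each supported in the closed unit ball {|x| ≤ 1}, such that the net (∫ψ_ε(x)dx − 1)_ε is negligible and, for every multi-index β with |β| ≥ 1, the net (∫x^β ψ_ε(x)dx)_ε is negligible. -/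
/-! Let `ρ` be a bump on `ℝ` with `∫ ρ = 1`. Since `∫ tᵏ ρ⁽ʲ⁾(t) dt` vanishes for `k < j` and
equals `(-1)ʲ j!` for `k = j`, subtracting suitable multiples of `ρ⁽¹⁾, …, ρ⁽ⁿ⁾` kills the moments
of orders `1, …, n` one at a time; the product of `d` copies of the result is a mollifier `Ψₙ` on `ℝ^d` whose
moments `∫ x^β Ψₙ` with all `βᵢ ≤ n` are those of the Dirac delta. Then `ψ_ε = Ψ_{N(ε)}`, where
`N(ε) → ∞` so slowly that the derivatives of order `≤ N(ε)` of `Ψ_{N(ε)}` stay below `ε⁻¹`, is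
moderate, and each fixed moment is exactly that of the delta once `ε` is small. -/

open Filter Topology MeasureTheory

/-- A negligible net of real numbers. -/
def IsNegligibleR (n : ℝ → ℝ) : Prop :=
  ∀ m : ℕ, ∀ᶠ ε in 𝓝[>] (0 : ℝ), |n ε| ≤ ε ^ m

/-- A net of smooth functions on `ℝ^d`, moderate in the sense of the Colombeau algebra
`𝒢(ℝ^d)`: on every compact set, every derivative grows at most like some `ε^{-M}`. -/
def GModerate {d : ℕ} (f : ℝ → EuclideanSpace ℝ (Fin d) → ℝ) : Prop :=
  ∀ K : Set (EuclideanSpace ℝ (Fin d)), IsCompact K → ∀ j : ℕ, ∃ M : ℕ,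
    ∀ᶠ ε in 𝓝[>] (0 : ℝ), ∀ x ∈ K, ‖iteratedFDeriv ℝ j (f ε) x‖ ≤ ε ^ (-(M : ℤ))

open scoped ContDiff Nat

section Moments

variable {f : ℝ → ℝ}

theorem integral_pow_mul_deriv (hf : ContDiff ℝ 1 f) (hc : HasCompactSupport f) (k : ℕ) :
    ∫ t, t ^ k * deriv f t = -(k * ∫ t, t ^ (k - 1) * f t) := by
  have hpow : Continuous fun t : ℝ => t ^ k := continuous_pow k
  have hpow' : Continuous fun t : ℝ => (k : ℝ) * t ^ (k - 1) := by fun_prop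
  -- at `k = 0` the truncated exponent `k - 1` is harmless, as the factor `k` vanishes
  rw [integral_mul_deriv_eq_deriv_mul_of_integrable (u' := fun t => (k : ℝ) * t ^ (k - 1))
    (fun t _ => hasDerivAt_pow k t) (fun t _ => (hf.differentiable one_ne_zero t).hasDerivAt)
    ((hpow.mul (hf.continuous_deriv le_rfl)).integrable_of_hasCompactSupport hc.deriv.mul_left)
    ((hpow'.mul hf.continuous).integrable_of_hasCompactSupport hc.mul_left)
    ((hpow.mul hf.continuous).integrable_of_hasCompactSupport hc.mul_left)]
  simp_rw [mul_assoc, integral_const_mul]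

theorem tsupport_iteratedDeriv_subset (n : ℕ) : tsupport (iteratedDeriv n f) ⊆ tsupport f := by
  induction n with
  | zero => rw [iteratedDeriv_zero]
  | succ n ih => rw [iteratedDeriv_succ]; exact tsupport_deriv_subset.trans ih

theorem HasCompactSupport.iteratedDeriv (hc : HasCompactSupport f) (n : ℕ) :
    HasCompactSupport (iteratedDeriv n f) :=
  hc.mono' (subset_tsupport _ |>.trans (tsupport_iteratedDeriv_subset n))

theorem ContDiff.iteratedDeriv (hf : ContDiff ℝ ∞ f) (n : ℕ) :
    ContDiff ℝ ∞ (iteratedDeriv n f) := by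
  rw [iteratedDeriv_eq_iterate]
  exact hf.iterate_deriv n

theorem integral_pow_mul_iteratedDeriv_of_lt (hf : ContDiff ℝ ∞ f) (hc : HasCompactSupport f)
    {k n : ℕ} (hkn : k < n) : ∫ t, t ^ k * iteratedDeriv n f t = 0 := by
  induction n generalizing k with
  | zero => omega
  | succ n ih =>
    rw [iteratedDeriv_succ, integral_pow_mul_deriv ((hf.iteratedDeriv n).of_le
      (by exact_mod_cast le_top)) (hc.iteratedDeriv n)]
    rcases k with _ | k
    · simp
    · rw [Nat.add_sub_cancel, ih (by omega), mul_zero, neg_zero]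

theorem integral_pow_mul_iteratedDeriv_self (hf : ContDiff ℝ ∞ f) (hc : HasCompactSupport f)
    (n : ℕ) : ∫ t, t ^ n * iteratedDeriv n f t = (-1) ^ n * n ! * ∫ t, f t := by
  induction n with
  | zero => simp
  | succ n ih =>
    rw [iteratedDeriv_succ, integral_pow_mul_deriv ((hf.iteratedDeriv n).of_le
      (by exact_mod_cast le_top)) (hc.iteratedDeriv n), Nat.add_sub_cancel, ih,
      Nat.factorial_succ]
    push_cast
    ring

end Moments

theorem exists_contDiff_tsupport_subset_moments_eq_delta {ρ : ℝ → ℝ} (hρ : ContDiff ℝ ∞ ρ)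
    (hc : HasCompactSupport ρ) (h1 : ∫ t, ρ t = 1) (n : ℕ) :
    ∃ g : ℝ → ℝ, ContDiff ℝ ∞ g ∧ tsupport g ⊆ tsupport ρ ∧
      ∀ k ≤ n, ∫ t, t ^ k * g t = if k = 0 then 1 else 0 := by
  induction n with
  | zero => exact ⟨ρ, hρ, subset_rfl, fun k hk => by simp [Nat.le_zero.mp hk, h1]⟩
  | succ n ih =>
    obtain ⟨g, hg, hgρ, hmom⟩ := ih
    set u := iteratedDeriv (n + 1) ρ
    have hu : ContDiff ℝ ∞ u := hρ.iteratedDeriv (n + 1)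
    have huc : HasCompactSupport u := hc.iteratedDeriv (n + 1)
    have hgc : HasCompactSupport g := hc.mono' (subset_tsupport g |>.trans hgρ)
    -- the moments of `u` below order `n + 1` vanish, so subtracting `c * u` only changes
    -- the moment of order `n + 1`
    set c := (∫ t, t ^ (n + 1) * g t) / ((-1) ^ (n + 1) * (n + 1)!)
    have hmom_sub (k : ℕ) : ∫ t, t ^ k * (g t - c * u t) =
        (∫ t, t ^ k * g t) - c * ∫ t, t ^ k * u t := by
      have hint {v : ℝ → ℝ} (hv : Continuous v) (hvc : HasCompactSupport v) :
          Integrable fun t => t ^ k * v t :=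
        ((continuous_pow k).mul hv).integrable_of_hasCompactSupport hvc.mul_left
      rw [← integral_const_mul, ← integral_sub (hint hg.continuous hgc)
        ((hint hu.continuous huc).const_mul c)]
      simp_rw [mul_sub, mul_left_comm _ c]
    refine ⟨fun t => g t - c * u t, hg.sub (contDiff_const.mul hu), ?_, fun k hk => ?_⟩
    · refine (tsupport_sub _ _).trans (Set.union_subset hgρ ?_)
      exact (tsupport_mul_subset_right).trans (tsupport_iteratedDeriv_subset (n + 1))
    · rw [hmom_sub]
      rcases hk.lt_or_eq with hk | rfl
      · rw [integral_pow_mul_iteratedDeriv_of_lt hρ hc hk, hmom k (by omega), mul_zero,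
          sub_zero]
      · rw [integral_pow_mul_iteratedDeriv_self hρ hc, h1, if_neg n.succ_ne_zero, mul_one]
        have hne : ((-1) ^ (n + 1) * (n + 1)! : ℝ) ≠ 0 := by positivity
        rw [div_mul_cancel₀ _ hne, sub_self]

namespace EuclideanSpace

variable {ι : Type*} [Fintype ι]

theorem integral_prod_eq_prod (F : ι → ℝ → ℝ) :
    ∫ x : EuclideanSpace ℝ ι, ∏ i, F i (x i) = ∏ i, ∫ t, F i t := by
  rw [← (PiLp.volume_preserving_toLp ι).integral_comp
    (MeasurableEquiv.toLp 2 _).measurableEmbedding]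
  exact integral_fintype_prod_volume_eq_prod F

theorem norm_le_sqrt_card_mul {x : EuclideanSpace ℝ ι} {r : ℝ} (hr : 0 ≤ r)
    (hx : ∀ i, |x i| ≤ r) : ‖x‖ ≤ √(Fintype.card ι) * r := by
  calc ‖x‖ = √(∑ i, ‖x i‖ ^ 2) := EuclideanSpace.norm_eq x
    _ ≤ √(∑ _i : ι, r ^ 2) := by
      gcongr with i
      exact hx i
    _ = √(Fintype.card ι) * r := by
      rw [Finset.sum_const, Finset.card_univ, nsmul_eq_mul, Real.sqrt_mul (by positivity),
        Real.sqrt_sq hr]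

theorem exists_contDiff_moments_eq_delta (ι : Type*) [Fintype ι] (n : ℕ) :
    ∃ Ψ : EuclideanSpace ℝ ι → ℝ, ContDiff ℝ ∞ Ψ ∧ tsupport Ψ ⊆ Metric.closedBall 0 1 ∧
      ∀ β : ι → ℕ, (∀ i, β i ≤ n) →
        ∫ x, (∏ i, x i ^ β i) * Ψ x = if β = 0 then 1 else 0 := by
  classical
  -- `r` is chosen so that the cube `[-r, r]^ι` lies in the unit ball
  set r : ℝ := 1 / (√(Fintype.card ι) + 1)
  have hr : 0 < r := by positivity
  let bump : ContDiffBump (0 : ℝ) := ⟨r / 2, r, by positivity, by linarith⟩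
  obtain ⟨g, hg, hgsupp, hmom⟩ := exists_contDiff_tsupport_subset_moments_eq_delta
    (bump.contDiff_normed (μ := volume)) bump.hasCompactSupport_normed bump.integral_normed n
  rw [bump.tsupport_normed_eq] at hgsupp
  refine ⟨fun x => ∏ i, g (x i),
    contDiff_prod fun i _ => hg.comp (proj (𝕜 := ℝ) i).contDiff, ?_, ?_⟩
  · have hbox : tsupport (fun x : EuclideanSpace ℝ ι => ∏ i, g (x i)) ⊆
        {x | ∀ i, x i ∈ tsupport g} := by
      refine closure_minimal (fun x hx i => subset_tsupport g ?_) ?_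
      · exact Finset.prod_ne_zero_iff.mp hx i (Finset.mem_univ i)
      · simp_rw [Set.ofPred_forall]
        exact isClosed_iInter fun i => (isClosed_tsupport g).preimage
          (proj (𝕜 := ℝ) i).continuous
    intro x hx
    have hxr : ∀ i, |x i| ≤ r := fun i => by
      simpa [Real.dist_eq] using hgsupp (hbox hx i)
    rw [Metric.mem_closedBall, dist_zero_right]
    calc ‖x‖ ≤ √(Fintype.card ι) * r := norm_le_sqrt_card_mul hr.le hxr
      _ ≤ 1 := by
        rw [mul_one_div, div_le_one (by positivity)]
        linarith
  · intro β hβ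
    have hmomβ (i : ι) : ∫ t, t ^ β i * g t = if β i = 0 then 1 else 0 := hmom _ (hβ i)
    simp_rw [← Finset.prod_mul_distrib]
    rw [integral_prod_eq_prod fun i t => t ^ β i * g t]
    simp_rw [hmomβ, Finset.prod_boole, Finset.mem_univ, true_implies, funext_iff, Pi.zero_apply]

end EuclideanSpace

theorem exists_bound_norm_iteratedFDeriv_of_hasCompactSupport {E F : Type*} [NormedAddCommGroup E]
    [NormedSpace ℝ E] [NormedAddCommGroup F] [NormedSpace ℝ F] {f : E → F}
    (hf : ContDiff ℝ ∞ f) (hc : HasCompactSupport f) (n : ℕ) :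
    ∃ C, ∀ j ≤ n, ∀ x, ‖iteratedFDeriv ℝ j f x‖ ≤ C := by
  choose C hC using fun j : ℕ => (hc.iteratedFDeriv j).exists_bound_of_continuous
    (hf.continuous_iteratedFDeriv (by exact_mod_cast le_top))
  obtain ⟨M, hM⟩ := ((Finset.range (n + 1)).image C).bddAbove
  exact ⟨M, fun j hj x => (hC j x).trans
    (hM (Finset.mem_coe.mpr (Finset.mem_image_of_mem C (Finset.mem_range.mpr (by omega)))))⟩

theorem exists_tendsto_atTop_and_eventually_le_inv (D : ℕ → ℝ) :
    ∃ N : ℝ → ℕ, Tendsto N (𝓝[>] 0) atTop ∧ ∀ᶠ ε in 𝓝[>] 0, D (N ε) ≤ ε⁻¹ := by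
  classical
  let N (ε : ℝ) : ℕ := Nat.findGreatest (fun n => ∀ m ≤ n, D m ≤ ε⁻¹) ⌊ε⁻¹⌋₊
  have hN (K : ℕ) : ∀ᶠ ε in 𝓝[>] 0, K ≤ N ε ∧ D (N ε) ≤ ε⁻¹ := by
    have hlarge (B : ℝ) : ∀ᶠ ε in 𝓝[>] (0 : ℝ), B ≤ ε⁻¹ :=
      tendsto_inv_nhdsGT_zero.eventually_ge_atTop B
    filter_upwards [hlarge K,
      (eventually_all_finite (Set.finite_Iic K)).mpr fun m _ => hlarge (D m)] with ε hKε hDε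
    exact ⟨Nat.le_findGreatest (Nat.le_floor hKε) hDε,
      Nat.findGreatest_spec (P := fun n => ∀ m ≤ n, D m ≤ ε⁻¹) (Nat.le_floor hKε) hDε _ le_rfl⟩
  exact ⟨N, tendsto_atTop.mpr fun K => (hN K).mono fun _ h => h.1, (hN 0).mono fun _ h => h.2⟩

theorem IsNegligibleR.of_eventually_eq_zero {n : ℝ → ℝ} (h : ∀ᶠ ε in 𝓝[>] 0, n ε = 0) :
    IsNegligibleR n := fun m => by
  filter_upwards [h, self_mem_nhdsWithin] with ε hε hpos
  rw [hε, abs_zero]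
  exact pow_nonneg (le_of_lt hpos) m

theorem GModerate.of_eventually_norm_iteratedFDeriv_le_inv {d : ℕ}
    {f : ℝ → EuclideanSpace ℝ (Fin d) → ℝ}
    (h : ∀ j, ∀ᶠ ε in 𝓝[>] 0, ∀ x, ‖iteratedFDeriv ℝ j (f ε) x‖ ≤ ε⁻¹) : GModerate f :=
  fun _ _ j => ⟨1, (h j).mono fun ε hε x _ => by simpa using hε x⟩

/-- There is a generalized mollifier `ψ ∈ 𝒢(ℝ^d)`, given by a moderate
net `(ψ_ε)` of smooth functions supported in the closed unit ball, with `∫ ψ = 1` in `ℝ̃`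
and `∫ x^β ψ(x) dx = 0` in `ℝ̃` for all multi-indices `β` with `|β| ≥ 1`. -/
theorem exists_generalized_mollifier (d : ℕ) :
    ∃ ψ : ℝ → EuclideanSpace ℝ (Fin d) → ℝ,
      (∀ ε, ContDiff ℝ (⊤ : ℕ∞) (ψ ε)) ∧
      (∀ ε, Function.support (ψ ε) ⊆ Metric.closedBall 0 1) ∧
      GModerate ψ ∧
      IsNegligibleR (fun ε => (∫ x, ψ ε x) - 1) ∧
      (∀ β : Fin d → ℕ, 1 ≤ ∑ i, β i →
        IsNegligibleR (fun ε => ∫ x, (∏ i, (x i) ^ (β i)) * ψ ε x)) := by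
  choose Ψ hΨ hsupp hmom using EuclideanSpace.exists_contDiff_moments_eq_delta (Fin d)
  have hc (n : ℕ) : HasCompactSupport (Ψ n) :=
    (isCompact_closedBall 0 1).of_isClosed_subset (isClosed_tsupport _) (hsupp n)
  choose D hD using fun n => exists_bound_norm_iteratedFDeriv_of_hasCompactSupport (hΨ n) (hc n) n
  obtain ⟨N, hN, hND⟩ := exists_tendsto_atTop_and_eventually_le_inv D
  refine ⟨fun ε => Ψ (N ε), fun ε => hΨ _, fun ε => (subset_tsupport _).trans (hsupp _), ?_, ?_,
    fun β hβ => ?_⟩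
  · refine GModerate.of_eventually_norm_iteratedFDeriv_le_inv fun j => ?_
    filter_upwards [hN.eventually_ge_atTop j, hND] with ε hj hε x
    exact (hD _ j hj x).trans hε
  · refine IsNegligibleR.of_eventually_eq_zero (Eventually.of_forall fun ε => ?_)
    simpa [sub_eq_zero] using hmom (N ε) 0 fun _ => Nat.zero_le _
  · refine IsNegligibleR.of_eventually_eq_zero ?_
    filter_upwards [hN.eventually_ge_atTop (∑ i, β i)] with ε hε
    rw [hmom _ β fun i => (Finset.single_le_sum (fun i _ => Nat.zero_le (β i))
      (Finset.mem_univ i)).trans hε, if_neg]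
    rintro rfl
    simp at hβ
end

section
/- (Spherical completeness of R̃ and C̃) Let K̃ be R̃ or C̃. Let (B_n)_{n∈ℕ} be a decreasing chain B_1 ⊇ B_2 ⊇ ⋯ of sharp balls B_n = {x ∈ K̃ : |x − a_n|_s ≤ r_n}, where a_n ∈ K̃ and r_n are positive real numbers. Then ⋂_{n∈ℕ} B_n ≠ ∅. -/
open Filter Topology Asymptotics

noncomputable section

namespace ColombeauPaper

variable {ι κ : Type*} {E : Type*} [AddCommGroup E] [Module ℝ E]
  {F : Type*} [AddCommGroup F] [Module ℝ F]

/-- A net `(u_ε)` in `E` is moderate for the family of seminorms `p` if for every `i`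
there is `M ∈ ℕ` with `p i (u_ε) ≤ ε ^ (-M)` for all sufficiently small `ε > 0`. -/
def IsModerate (p : ι → Seminorm ℝ E) (u : ℝ → E) : Prop :=
  ∀ i, ∃ M : ℕ, ∀ᶠ ε in 𝓝[>] (0 : ℝ), p i (u ε) ≤ ε ^ (-(M : ℤ))

/-- A net `(u_ε)` in `E` is negligible if for every `i` and every `m ∈ ℕ` one has
`p i (u_ε) ≤ ε ^ m` for all sufficiently small `ε > 0`. -/
def IsNegligible (p : ι → Seminorm ℝ E) (u : ℝ → E) : Prop :=
  ∀ i, ∀ m : ℕ, ∀ᶠ ε in 𝓝[>] (0 : ℝ), p i (u ε) ≤ ε ^ m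

/-- A negligible net of real numbers. -/
def IsNegligibleR (n : ℝ → ℝ) : Prop :=
  ∀ m : ℕ, ∀ᶠ ε in 𝓝[>] (0 : ℝ), |n ε| ≤ ε ^ m

lemma small_mem : {ε : ℝ | 0 < ε ∧ ε ≤ 1 / 2} ∈ 𝓝[>] (0 : ℝ) := by
  have h : Set.Ioo (0 : ℝ) (1 / 2) ∈ 𝓝[>] (0 : ℝ) :=
    Ioo_mem_nhdsGT_of_mem ⟨le_refl 0, by norm_num⟩
  filter_upwards [h] with ε hε
  exact ⟨hε.1, hε.2.le⟩

lemma zpow_neg_natCast_eq {ε : ℝ} (k : ℕ) : ε ^ (-(k : ℤ)) = ε⁻¹ ^ (k : ℤ) := by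
  rw [zpow_neg, inv_zpow]

/-- The moderate nets form an additive subgroup of `(0,1) → E` (here modelled on `ℝ → E`,
with all conditions holding for sufficiently small `ε > 0`). -/
def moderateGroup (p : ι → Seminorm ℝ E) : AddSubgroup (ℝ → E) where
  carrier := {u | IsModerate p u}
  zero_mem' := by
    intro i
    refine ⟨0, ?_⟩
    filter_upwards [self_mem_nhdsWithin] with ε hε
    have hε' : (0 : ℝ) < ε := hε
    simp only [Pi.zero_apply, map_zero]
    positivity
  add_mem' := by
    intro u v hu hv i
    obtain ⟨M, hM⟩ := hu i
    obtain ⟨N, hN⟩ := hv i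
    refine ⟨max M N + 1, ?_⟩
    filter_upwards [hM, hN, small_mem] with ε h1 h2 h3
    obtain ⟨hε, hε2⟩ := h3
    have hinv : (1 : ℝ) ≤ ε⁻¹ := (one_le_inv₀ hε).2 (by linarith)
    have h2inv : (2 : ℝ) ≤ ε⁻¹ := by
      nlinarith [mul_inv_cancel₀ (ne_of_gt hε)]
    have key : ∀ k l : ℕ, k ≤ l → ε ^ (-(k : ℤ)) ≤ ε ^ (-(l : ℤ)) := by
      intro k l hkl
      rw [zpow_neg_natCast_eq, zpow_neg_natCast_eq]
      exact zpow_le_zpow_right₀ hinv (by exact_mod_cast hkl)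
    set K : ℕ := max M N with hK
    have h1' : p i (u ε) ≤ ε ^ (-(K : ℤ)) := h1.trans (key M K (le_max_left _ _))
    have h2' : p i (v ε) ≤ ε ^ (-(K : ℤ)) := h2.trans (key N K (le_max_right _ _))
    have tri : p i ((u + v) ε) ≤ p i (u ε) + p i (v ε) := by
      simpa using map_add_le_add (p i) (u ε) (v ε)
    have efin : ε ^ (-(K : ℤ)) * 2 ≤ ε ^ (-((K + 1 : ℕ) : ℤ)) := by
      rw [zpow_neg_natCast_eq, zpow_neg_natCast_eq]
      push_cast
      have hnn : (0:ℝ) ≤ ε⁻¹ ^ (K : ℤ) := by positivity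
      calc ε⁻¹ ^ (K : ℤ) * 2 ≤ ε⁻¹ ^ (K : ℤ) * ε⁻¹ :=
            mul_le_mul_of_nonneg_left h2inv hnn
        _ = ε⁻¹ ^ ((K : ℤ) + 1) := by rw [zpow_add₀ (by positivity : (ε⁻¹ : ℝ) ≠ 0), zpow_one]
    push_cast at efin ⊢
    linarith
  neg_mem' := by
    intro u hu i
    obtain ⟨M, hM⟩ := hu i
    refine ⟨M, ?_⟩
    filter_upwards [hM] with ε h
    simpa [map_neg_eq_map] using h

/-- The negligible nets form an additive subgroup of the moderate ones. -/
def negligibleGroup (p : ι → Seminorm ℝ E) : AddSubgroup (moderateGroup p) where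
  carrier := {u | IsNegligible p (u : ℝ → E)}
  zero_mem' := by
    intro i m
    filter_upwards [self_mem_nhdsWithin] with ε hε
    have hε' : (0 : ℝ) < ε := hε
    simp only [AddSubgroup.coe_zero, Pi.zero_apply, map_zero]
    positivity
  add_mem' := by
    intro u v hu hv i m
    filter_upwards [hu i (m + 1), hv i (m + 1), small_mem] with ε h1 h2 h3
    obtain ⟨hε, hε2⟩ := h3
    have tri : p i (((u + v : moderateGroup p) : ℝ → E) ε)
        ≤ p i ((u : ℝ → E) ε) + p i ((v : ℝ → E) ε) := by
      simpa using map_add_le_add (p i) ((u : ℝ → E) ε) ((v : ℝ → E) ε)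
    have hpow : ε ^ (m + 1) = ε ^ m * ε := pow_succ ε m
    nlinarith [pow_nonneg hε.le m]
  neg_mem' := by
    intro u hu i m
    filter_upwards [hu i m] with ε h
    have : ((-u : moderateGroup p) : ℝ → E) ε = -((u : ℝ → E) ε) := rfl
    rw [this, map_neg_eq_map]
    exact h

/-- The Colombeau space based on `E` (with the family of seminorms `p`):
the quotient of the moderate nets by the negligible ones. -/
abbrev Colombeau (p : ι → Seminorm ℝ E) : Type _ :=
  moderateGroup p ⧸ negligibleGroup p

/-- The internal subset of `𝒢_E` generated by a net `(A_ε)` of subsets of `E`: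
all `u` having a representative `(u_ε)` with `u_ε ∈ A_ε` for sufficiently small `ε`. -/
def internalSet (p : ι → Seminorm ℝ E) (A : ℝ → Set E) : Set (Colombeau p) :=
  {u | ∃ w : moderateGroup p, (QuotientAddGroup.mk w : Colombeau p) = u ∧
        ∀ᶠ ε in 𝓝[>] (0 : ℝ), (w : ℝ → E) ε ∈ A ε}

/-- A subset of `𝒢_E` is internal if it is generated by some net of subsets of `E`. -/
def IsInternal (p : ι → Seminorm ℝ E) (A : Set (Colombeau p)) : Prop :=
  ∃ Anet : ℝ → Set E, A = internalSet p Anet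

/-- `d_i(u, A) = inf_{v ∈ A} p_i (u - v)`, with value `+∞` for `A = ∅`. -/
def semiDist (p : ι → Seminorm ℝ E) (i : ι) (u : E) (A : Set E) : EReal :=
  ⨅ v ∈ A, ((p i (u - v) : ℝ) : EReal)

/-- A sharply bounded net of subsets of `E`. -/
def SharplyBoundedNet (p : ι → Seminorm ℝ E) (A : ℝ → Set E) : Prop :=
  ∀ i, ∃ M : ℕ, ∀ᶠ ε in 𝓝[>] (0 : ℝ), ∀ w ∈ A ε, p i w ≤ ε ^ (-(M : ℤ))

/-- `p_i(u) ≤ α ^ t` in `ℝ̃` (where `α` is the class of `(ε)_ε`): some representative of the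
net of seminorms is bounded by `ε ^ t` up to a negligible net for small `ε`. -/
def seminormLeAlpha (p : ι → Seminorm ℝ E) (i : ι) (u : Colombeau p) (t : ℝ) : Prop :=
  ∃ (w : moderateGroup p) (n : ℝ → ℝ), (QuotientAddGroup.mk w : Colombeau p) = u ∧
    IsNegligibleR n ∧ ∀ᶠ ε in 𝓝[>] (0 : ℝ), p i ((w : ℝ → E) ε) ≤ ε ^ t + n ε

/-- The ultra-pseudo-seminorm `u ↦ |p_i(u)|_s = e^{-ν(p_i(u))}` on `𝒢_E`, where
`ν(x) = sup {b : |x_ε| = O(ε^b)}` is the valuation. -/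
def sharpSemi (p : ι → Seminorm ℝ E) (i : ι) (u : Colombeau p) : ℝ :=
  sInf {r : ℝ | ∃ (b : ℝ) (w : moderateGroup p), (QuotientAddGroup.mk w : Colombeau p) = u ∧
    r = Real.exp (-b) ∧ (fun ε => (p i ((w : ℝ → E) ε) : ℝ)) =O[𝓝[>] (0 : ℝ)] fun ε => ε ^ b}

/-- The sharp topology on `𝒢_E`: the topology generated by the ultra-pseudo-seminorms
`u ↦ |p_i(u)|_s`, i.e. generated by all the corresponding balls. -/
def sharpTopology (p : ι → Seminorm ℝ E) : TopologicalSpace (Colombeau p) :=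
  TopologicalSpace.generateFrom
    {B | ∃ (u : Colombeau p) (i : ι) (r : ℝ), 0 < r ∧
          B = {v | sharpSemi p i (v - u) < r}}

lemma indicator_norm_le_one (S : Set ℝ) (ε : ℝ) :
    ‖S.indicator (fun _ => (1 : ℝ)) ε‖ ≤ 1 := by
  by_cases h : ε ∈ S <;>
    simp [Set.indicator_of_mem, Set.indicator_of_notMem, h]

lemma eAux_le (p : ι → Seminorm ℝ E) (S : Set ℝ) (i : ι) (ε : ℝ) (x : E) :
    p i (S.indicator (fun _ => (1 : ℝ)) ε • x) ≤ p i x := by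
  rw [map_smul_eq_mul]
  calc ‖S.indicator (fun _ => (1 : ℝ)) ε‖ * p i x ≤ 1 * p i x :=
        mul_le_mul_of_nonneg_right (indicator_norm_le_one S ε) (apply_nonneg _ _)
    _ = p i x := one_mul _

/-- Multiplication by the characteristic function `χ_S`, on representatives. -/
def eAux (p : ι → Seminorm ℝ E) (S : Set ℝ) : moderateGroup p →+ moderateGroup p where
  toFun u := ⟨fun ε => S.indicator (fun _ => (1 : ℝ)) ε • (u : ℝ → E) ε, by
    have hu : IsModerate p (u : ℝ → E) := u.2
    intro i
    obtain ⟨M, hM⟩ := hu i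
    refine ⟨M, ?_⟩
    filter_upwards [hM] with ε hε
    exact (eAux_le p S i ε _).trans hε⟩
  map_zero' := by
    apply Subtype.ext
    funext ε
    simp
  map_add' u v := by
    apply Subtype.ext
    funext ε
    simp [smul_add]

/-- Multiplication by `e_S`, the class of the characteristic function of `S ⊆ (0,1)`,
as a map `𝒢_E → 𝒢_E`. -/
def eMul (p : ι → Seminorm ℝ E) (S : Set ℝ) : Colombeau p →+ Colombeau p :=
  QuotientAddGroup.map _ _ (eAux p S) (by
    intro u hu
    rw [AddSubgroup.mem_comap]
    have hu' : IsNegligible p (u : ℝ → E) := hu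
    show IsNegligible p _
    intro i m
    filter_upwards [hu' i m] with ε hε
    exact (eAux_le p S i ε _).trans hε)

/-- The set of finite interleavings `∑_{j=1}^m e_{S_j} a_j` of elements of `A`,
over partitions `{S_1, …, S_m}` of `(0,1)`. -/
def interleaving (p : ι → Seminorm ℝ E) (A : Set (Colombeau p)) : Set (Colombeau p) :=
  {u | ∃ (m : ℕ) (S : Fin m → Set ℝ) (a : Fin m → Colombeau p),
        (∀ j, a j ∈ A) ∧ (∀ j, S j ⊆ Set.Ioo 0 1) ∧
        (Pairwise fun j k => Disjoint (S j) (S k)) ∧ (⋃ j, S j) = Set.Ioo 0 1 ∧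
        u = ∑ j, eMul p (S j) (a j)}

/-- The family of seminorms `max (p_i, q_j)` generating the product topology on `E × F`. -/
def prodSeminorm (p : ι → Seminorm ℝ E) (q : κ → Seminorm ℝ F) :
    ι × κ → Seminorm ℝ (E × F) :=
  fun ij => (p ij.1).comp (LinearMap.fst ℝ E F) ⊔ (q ij.2).comp (LinearMap.snd ℝ E F)

lemma prodSeminorm_apply (p : ι → Seminorm ℝ E) (q : κ → Seminorm ℝ F) (i : ι) (j : κ)
    (x : E × F) : prodSeminorm p q (i, j) x = max (p i x.1) (q j x.2) := by
  simp [prodSeminorm, Seminorm.sup_apply, Seminorm.comp_apply]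

/-- First component of a moderate net in `E × F`, as a moderate net in `E`. -/
def prodFstAux [Nonempty κ] (p : ι → Seminorm ℝ E) (q : κ → Seminorm ℝ F) :
    moderateGroup (prodSeminorm p q) →+ moderateGroup p where
  toFun w := ⟨fun ε => ((w : ℝ → E × F) ε).1, by
    have hw : IsModerate (prodSeminorm p q) (w : ℝ → E × F) := w.2
    intro i
    obtain ⟨j⟩ := ‹Nonempty κ›
    obtain ⟨M, hM⟩ := hw (i, j)
    refine ⟨M, ?_⟩
    filter_upwards [hM] with ε hε
    calc p i (((w : ℝ → E × F) ε).1) ≤ prodSeminorm p q (i, j) ((w : ℝ → E × F) ε) := by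
          rw [prodSeminorm_apply]; exact le_max_left _ _
      _ ≤ ε ^ (-(M : ℤ)) := hε⟩
  map_zero' := by apply Subtype.ext; funext ε; simp
  map_add' u v := by apply Subtype.ext; funext ε; simp

/-- Second component of a moderate net in `E × F`, as a moderate net in `F`. -/
def prodSndAux [Nonempty ι] (p : ι → Seminorm ℝ E) (q : κ → Seminorm ℝ F) :
    moderateGroup (prodSeminorm p q) →+ moderateGroup q where
  toFun w := ⟨fun ε => ((w : ℝ → E × F) ε).2, by
    have hw : IsModerate (prodSeminorm p q) (w : ℝ → E × F) := w.2
    intro j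
    obtain ⟨i⟩ := ‹Nonempty ι›
    obtain ⟨M, hM⟩ := hw (i, j)
    refine ⟨M, ?_⟩
    filter_upwards [hM] with ε hε
    calc q j (((w : ℝ → E × F) ε).2) ≤ prodSeminorm p q (i, j) ((w : ℝ → E × F) ε) := by
          rw [prodSeminorm_apply]; exact le_max_right _ _
      _ ≤ ε ^ (-(M : ℤ)) := hε⟩
  map_zero' := by apply Subtype.ext; funext ε; simp
  map_add' u v := by apply Subtype.ext; funext ε; simp

/-- The canonical identification `𝒢_{E × F} ≅ 𝒢_E × 𝒢_F` (given on representatives by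
`[(u_ε, v_ε)] ↦ ([(u_ε)], [(v_ε)])`). -/
def prodIdent [Nonempty ι] [Nonempty κ] (p : ι → Seminorm ℝ E) (q : κ → Seminorm ℝ F) :
    Colombeau (prodSeminorm p q) →+ Colombeau p × Colombeau q :=
  QuotientAddGroup.lift (negligibleGroup (prodSeminorm p q))
    (((QuotientAddGroup.mk' (negligibleGroup p)).comp (prodFstAux p q)).prod
      ((QuotientAddGroup.mk' (negligibleGroup q)).comp (prodSndAux p q)))
    (by
      intro w hw
      have hw' : IsNegligible (prodSeminorm p q) (w : ℝ → E × F) := hw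
      rw [AddMonoidHom.mem_ker]
      refine Prod.ext ?_ ?_
      · show (QuotientAddGroup.mk' (negligibleGroup p)) (prodFstAux p q w) = 0
        rw [QuotientAddGroup.mk'_apply, QuotientAddGroup.eq_zero_iff]
        show IsNegligible p _
        intro i m
        obtain ⟨j⟩ := ‹Nonempty κ›
        filter_upwards [hw' (i, j) m] with ε hε
        calc p i (((w : ℝ → E × F) ε).1)
            ≤ prodSeminorm p q (i, j) ((w : ℝ → E × F) ε) := by
              rw [prodSeminorm_apply]; exact le_max_left _ _
          _ ≤ ε ^ m := hε
      · show (QuotientAddGroup.mk' (negligibleGroup q)) (prodSndAux p q w) = 0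
        rw [QuotientAddGroup.mk'_apply, QuotientAddGroup.eq_zero_iff]
        show IsNegligible q _
        intro j m
        obtain ⟨i⟩ := ‹Nonempty ι›
        filter_upwards [hw' (i, j) m] with ε hε
        calc q j (((w : ℝ → E × F) ε).2)
            ≤ prodSeminorm p q (i, j) ((w : ℝ → E × F) ε) := by
              rw [prodSeminorm_apply]; exact le_max_right _ _
          _ ≤ ε ^ m := hε)

/-- A subset of `𝒢_E × 𝒢_F` is internal if, under the canonical identification
`𝒢_{E×F} ≅ 𝒢_E × 𝒢_F`, it corresponds to an internal subset of `𝒢_{E×F}`. -/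
def IsInternalProd [Nonempty ι] [Nonempty κ] (p : ι → Seminorm ℝ E) (q : κ → Seminorm ℝ F)
    (C : Set (Colombeau p × Colombeau q)) : Prop :=
  ∃ Cnet : ℝ → Set (E × F),
    C = prodIdent p q '' internalSet (prodSeminorm p q) Cnet

section Normed

variable (V : Type*) [NormedAddCommGroup V] [NormedSpace ℝ V]

/-- The norm of a normed space, as a one-element family of seminorms. -/
abbrev normFamily : Unit → Seminorm ℝ V := fun _ => normSeminorm ℝ V

/-- The Colombeau space based on a normed space `V`. -/
abbrev GN := Colombeau (normFamily V)

variable {V}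

/-- `‖u‖ ≤ α ^ t` in `ℝ̃`, where `α` is the class of `(ε)_ε`. -/
def normLeAlpha (u : GN V) (t : ℝ) : Prop :=
  ∃ (w : moderateGroup (normFamily V)) (n : ℝ → ℝ),
    (QuotientAddGroup.mk w : GN V) = u ∧ IsNegligibleR n ∧
    ∀ᶠ ε in 𝓝[>] (0 : ℝ), ‖(w : ℝ → V) ε‖ ≤ ε ^ t + n ε

/-- `‖u‖ ≤ ‖v‖` in `ℝ̃`. -/
def normLeNorm (u v : GN V) : Prop :=
  ∃ (a b : moderateGroup (normFamily V)) (n : ℝ → ℝ),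
    (QuotientAddGroup.mk a : GN V) = u ∧ (QuotientAddGroup.mk b : GN V) = v ∧
    IsNegligibleR n ∧
    ∀ᶠ ε in 𝓝[>] (0 : ℝ), ‖(a : ℝ → V) ε‖ ≤ ‖(b : ℝ → V) ε‖ + n ε

/-- A subset `A ⊆ 𝒢_V` is sharply bounded if `‖u‖ ≤ α^{-M}` for some `M ∈ ℕ` and all `u ∈ A`. -/
def SharplyBounded (A : Set (GN V)) : Prop :=
  ∃ M : ℕ, ∀ u ∈ A, normLeAlpha u (-(M : ℝ))

/-- A sharply bounded net of subsets of the normed space `V`. -/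
def SharplyBoundedNetN (A : ℝ → Set V) : Prop :=
  ∃ M : ℕ, ∀ᶠ ε in 𝓝[>] (0 : ℝ), ∀ w ∈ A ε, ‖w‖ ≤ ε ^ (-(M : ℤ))

end Normed

/-!
The ball `|x - a|_s ≤ exp (-c)` is described on representatives: `‖x_ε - a_ε‖ ≤ ε ^ b` for small
`ε`, for every `b < c`. Every centre `a_k` with `k ≥ n` lies in the `n`-th ball, so the
representatives of the centres satisfy these bounds relative to each other. Any finite set of
them holds on some interval `(0, η)`, so gluing the representatives diagonally,
`x_ε := a_{N(ε)}(ε)` with `N(ε) → ∞` slowly enough as `ε → 0`, gives a net satisfying all the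
bounds at once; it is moderate, and its class lies in every ball.
-/

theorem _root_.Filter.exists_forall_eventually_of_ker_eq_empty {α β : Type*} {l : Filter α}
    [l.IsCountablyGenerated] (hl : l.ker = ∅) {P : ℕ → α → β → Prop} {f : ℕ → α → β}
    (hf : ∀ j m, j ≤ m → ∀ᶠ a in l, P j a (f m a)) :
    ∃ x : α → β, ∀ j, ∀ᶠ a in l, P j a (x a) := by
  classical
  obtain ⟨s, hs⟩ := l.exists_antitone_basis
  set good : ℕ → Set α := fun m => s m ∩ {a | ∀ j ≤ m, P j a (f m a)}
  have hgood : ∀ m, good m ∈ l := fun m =>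
    inter_mem (hs.mem m) ((Set.finite_le_nat m).eventually_all.2 fun j hj => hf j m hj)
  have hexit : ∀ a, ∃ M, a ∉ s M := by
    intro a
    have : a ∉ l.ker := hl ▸ Set.notMem_empty a
    simpa [hs.1.ker] using this
  -- `a` lies in only finitely many `s m`, so there is a last `m` with `a ∈ good m`.
  set N : α → ℕ := fun a => Nat.findGreatest (fun m => a ∈ good m) (Nat.find (hexit a))
  refine ⟨fun a => f (N a) a, fun j => ?_⟩
  filter_upwards [hgood j] with a ha
  have hj : j ≤ Nat.find (hexit a) := by
    by_contra! h
    exact Nat.find_spec (hexit a) (hs.2 h.le ha.1)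
  exact (Nat.findGreatest_spec (P := fun m => a ∈ good m) hj ha).2 j (Nat.le_findGreatest hj ha)

theorem _root_.ker_nhdsGT_zero : (𝓝[>] (0 : ℝ)).ker = ∅ := by
  simp [nhdsWithin, ker_nhds]

theorem _root_.isLittleO_rpow_rpow_nhdsGT_zero {b b' : ℝ} (h : b < b') :
    (fun ε : ℝ => ε ^ b') =o[𝓝[>] 0] fun ε => ε ^ b := by
  refine (isLittleO_iff_tendsto' ?_).2 ?_
  · filter_upwards [self_mem_nhdsWithin] with ε (hε : 0 < ε) h0
    exact absurd h0 (Real.rpow_pos_of_pos hε b).ne'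
  · have hlim : Tendsto (fun ε : ℝ => ε ^ (b' - b)) (𝓝[>] 0) (𝓝 0) := by
      have := ((Real.continuous_rpow_const (sub_pos.2 h).le).tendsto 0).mono_left
        (nhdsWithin_le_nhds (s := Set.Ioi 0))
      rwa [Real.zero_rpow (sub_pos.2 h).ne'] at this
    refine hlim.congr' ?_
    filter_upwards [self_mem_nhdsWithin] with ε (hε : 0 < ε)
    rw [Real.rpow_sub hε]

theorem _root_.isBigO_rpow_nhdsGT_zero_of_eventually_le {f : ℝ → ℝ} (hf : 0 ≤ f) {b : ℝ}
    (h : ∀ᶠ ε in 𝓝[>] 0, f ε ≤ ε ^ b) : f =O[𝓝[>] 0] fun ε => ε ^ b :=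
  IsBigO.of_norm_eventuallyLE <| by
    filter_upwards [h] with ε hε
    rwa [Real.norm_of_nonneg (hf ε)]

theorem isModerate_of_eventually_le_rpow {p : ι → Seminorm ℝ E} {u : ℝ → E}
    (h : ∀ i, ∃ b : ℝ, ∀ᶠ ε in 𝓝[>] 0, p i (u ε) ≤ ε ^ b) : IsModerate p u := by
  intro i
  obtain ⟨b, hb⟩ := h i
  refine ⟨⌈-b⌉₊, ?_⟩
  filter_upwards [hb, Ioc_mem_nhdsGT (zero_lt_one' ℝ)] with ε hε hε1
  rw [← Real.rpow_neg_natCast]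
  exact hε.trans (Real.rpow_le_rpow_of_exponent_ge hε1.1 hε1.2 (by linarith [Nat.le_ceil (-b)]))

theorem IsNegligible.isBigO_rpow {p : ι → Seminorm ℝ E} {u : ℝ → E} (hu : IsNegligible p u)
    (i : ι) (b : ℝ) : (fun ε => p i (u ε)) =O[𝓝[>] 0] fun ε => ε ^ b := by
  refine isBigO_rpow_nhdsGT_zero_of_eventually_le (fun ε => apply_nonneg _ _) ?_
  filter_upwards [hu i ⌈b⌉₊, Ioc_mem_nhdsGT (zero_lt_one' ℝ)] with ε hε hε1
  refine hε.trans ?_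
  rw [← Real.rpow_natCast]
  exact Real.rpow_le_rpow_of_exponent_ge hε1.1 hε1.2 (Nat.le_ceil b)

theorem isBigO_rpow_of_mk_eq {p : ι → Seminorm ℝ E} {w w' : moderateGroup p}
    (h : (QuotientAddGroup.mk w : Colombeau p) = QuotientAddGroup.mk w') {i : ι} {b : ℝ}
    (hw' : (fun ε => p i ((w' : ℝ → E) ε)) =O[𝓝[>] 0] fun ε => ε ^ b) :
    (fun ε => p i ((w : ℝ → E) ε)) =O[𝓝[>] 0] fun ε => ε ^ b := by
  have hneg : IsNegligible p ((-w + w' : moderateGroup p) : ℝ → E) := QuotientAddGroup.eq.1 h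
  have htri : ∀ ε, p i ((w : ℝ → E) ε) ≤
      p i ((w' : ℝ → E) ε) + p i (((-w + w' : moderateGroup p) : ℝ → E) ε) := fun ε => by
    simpa using map_sub_le_add (p i) ((w' : ℝ → E) ε) (-(w : ℝ → E) ε + (w' : ℝ → E) ε)
  refine IsBigO.trans ?_ (hw'.add (hneg.isBigO_rpow i b))
  refine IsBigO.of_bound' (Eventually.of_forall fun ε => ?_)
  rw [Real.norm_of_nonneg (apply_nonneg _ _),
    Real.norm_of_nonneg (add_nonneg (apply_nonneg _ _) (apply_nonneg _ _))]
  exact htri ε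

theorem sharpSemi_le_exp_iff {p : ι → Seminorm ℝ E} {i : ι} {u : Colombeau p}
    {w : moderateGroup p} (hw : (QuotientAddGroup.mk w : Colombeau p) = u) (c : ℝ) :
    sharpSemi p i u ≤ Real.exp (-c) ↔
      ∀ b < c, ∀ᶠ ε in 𝓝[>] 0, p i ((w : ℝ → E) ε) ≤ ε ^ b := by
  set S := {r : ℝ | ∃ (b : ℝ) (w : moderateGroup p), (QuotientAddGroup.mk w : Colombeau p) = u ∧
    r = Real.exp (-b) ∧ (fun ε => (p i ((w : ℝ → E) ε) : ℝ)) =O[𝓝[>] (0 : ℝ)] fun ε => ε ^ b}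
  have hS : sharpSemi p i u = sInf S := rfl
  have hbdd : BddBelow S := ⟨0, by rintro _ ⟨b, -, -, rfl, -⟩; exact (Real.exp_pos _).le⟩
  have hmem : ∀ b, (∀ᶠ ε in 𝓝[>] 0, p i ((w : ℝ → E) ε) ≤ ε ^ b) → Real.exp (-b) ∈ S :=
    fun b hb => ⟨b, w, hw, rfl,
      isBigO_rpow_nhdsGT_zero_of_eventually_le (fun ε => apply_nonneg _ _) hb⟩
  rw [hS]
  constructor
  · intro hle b hb
    have hne : S.Nonempty := by
      obtain ⟨M, hM⟩ := w.2 i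
      refine ⟨_, hmem (-(M : ℝ)) ?_⟩
      filter_upwards [hM] with ε hε
      rwa [Real.rpow_neg_natCast]
    obtain ⟨_, ⟨b', w', hw', rfl, hO⟩, hlt⟩ :=
      exists_lt_of_csInf_lt hne (hle.trans_lt (Real.exp_lt_exp.2 (neg_lt_neg hb)))
    have hbb' : b < b' := neg_lt_neg_iff.1 (Real.exp_lt_exp.1 hlt)
    have hlo := (isBigO_rpow_of_mk_eq (hw.trans hw'.symm) hO).trans_isLittleO
      (isLittleO_rpow_rpow_nhdsGT_zero hbb')
    filter_upwards [hlo.bound one_pos, self_mem_nhdsWithin] with ε hε (hε0 : 0 < ε)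
    rwa [one_mul, Real.norm_of_nonneg (apply_nonneg _ _),
      Real.norm_of_nonneg (Real.rpow_nonneg hε0.le b)] at hε
  · intro h
    by_contra! hlt
    have hpos : 0 < sInf S := (Real.exp_pos _).trans hlt
    obtain ⟨b, hb, hbc⟩ := exists_between (show -Real.log (sInf S) < c by
      rw [neg_lt, ← Real.exp_lt_exp, Real.exp_log hpos]; exact hlt)
    have := csInf_le hbdd (hmem b (h b hbc))
    rw [← Real.exp_log hpos, Real.exp_le_exp] at this
    linarith

theorem exists_forall_eventually_le_rpow_sub (q : Seminorm ℝ E) (f : ℕ → ℝ → E) (c : ℕ → ℝ)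
    (hf : ∀ n k, n ≤ k → ∀ b < c n, ∀ᶠ ε in 𝓝[>] 0, q (f k ε - f n ε) ≤ ε ^ b) :
    ∃ x : ℝ → E, ∀ n, ∀ b < c n, ∀ᶠ ε in 𝓝[>] 0, q (x ε - f n ε) ≤ ε ^ b := by
  obtain ⟨x, hx⟩ := exists_forall_eventually_of_ker_eq_empty ker_nhdsGT_zero
    (P := fun j ε y => ∀ n ≤ j, q (y - f n ε) ≤ ε ^ (c n - 1 / ((j : ℝ) + 1))) (f := f)
    fun j m hjm => (Set.finite_le_nat j).eventually_all.2 fun n hn =>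
      hf n m (hn.trans hjm) _ (sub_lt_self _ Nat.one_div_pos_of_nat)
  refine ⟨x, fun n b hb => ?_⟩
  obtain ⟨j, hj⟩ := exists_nat_one_div_lt (sub_pos.2 hb)
  filter_upwards [hx (max n j), Ioc_mem_nhdsGT (zero_lt_one' ℝ)] with ε hε hε1
  refine (hε n (le_max_left n j)).trans (Real.rpow_le_rpow_of_exponent_ge hε1.1 hε1.2 ?_)
  have : 1 / ((max n j : ℕ) + 1 : ℝ) ≤ 1 / ((j : ℝ) + 1) :=
    one_div_le_one_div_of_le (by positivity) (by gcongr; exact_mod_cast le_max_right n j)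
  linarith

section SharpClosedBall

variable {V : Type*} [NormedAddCommGroup V] [NormedSpace ℝ V]

def sharpClosedBall (a : GN V) (r : ℝ) : Set (GN V) :=
  {x | sharpSemi (normFamily V) () (x - a) ≤ r}

theorem mem_sharpClosedBall {a x : GN V} {r : ℝ} :
    x ∈ sharpClosedBall a r ↔ sharpSemi (normFamily V) () (x - a) ≤ r :=
  Iff.rfl

theorem iInter_sharpClosedBall_nonempty {a : ℕ → GN V} {r : ℕ → ℝ} (hr : ∀ n, 0 < r n)
    (hanti : Antitone fun n => sharpClosedBall (a n) (r n)) :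
    (⋂ n, sharpClosedBall (a n) (r n)).Nonempty := by
  set c : ℕ → ℝ := fun n => -Real.log (r n)
  have hrc : ∀ n, r n = Real.exp (-c n) := fun n => by simp [c, Real.exp_log (hr n)]
  set A : ℕ → moderateGroup (normFamily V) := fun n => (a n).out
  have hA : ∀ n, (QuotientAddGroup.mk (A n) : GN V) = a n := fun n => (a n).out_eq'
  have hcenter : ∀ n k, n ≤ k → a k ∈ sharpClosedBall (a n) (r n) := by
    intro n k hnk
    refine hanti hnk (mem_sharpClosedBall.2 ?_)
    rw [sub_self, hrc, ← QuotientAddGroup.mk_zero, sharpSemi_le_exp_iff rfl]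
    intro b _
    filter_upwards [self_mem_nhdsWithin] with ε (hε : 0 < ε)
    simpa using (Real.rpow_pos_of_pos hε b).le
  obtain ⟨x, hx⟩ := exists_forall_eventually_le_rpow_sub (normFamily V ()) (fun n => A n) c
    fun n k hnk => (sharpSemi_le_exp_iff (w := A k - A n)
      (by rw [QuotientAddGroup.mk_sub, hA, hA]) (c n)).1 (hrc n ▸ hcenter n k hnk)
  have hxA : IsModerate (normFamily V) (x - A 0) :=
    isModerate_of_eventually_le_rpow fun _ => ⟨c 0 - 1, hx 0 _ (sub_one_lt _)⟩
  set X : moderateGroup (normFamily V) :=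
    ⟨x, by simpa using add_mem (hxA : x - _ ∈ moderateGroup _) (A 0).2⟩
  refine ⟨QuotientAddGroup.mk X, Set.mem_iInter.2 fun n => mem_sharpClosedBall.2 ?_⟩
  rw [hrc, ← hA, ← QuotientAddGroup.mk_sub, sharpSemi_le_exp_iff rfl]
  exact hx n

end SharpClosedBall

/-- **Spherical completeness of `ℝ̃` and `ℂ̃`.** A decreasing chain of sharp
balls `B_n = {x : |x - a_n|_s ≤ r_n}` in `𝕂̃` (`𝕂 = ℝ` or `ℂ`) has non-void intersection. -/
theorem spherical_completeness (K : Type*) [RCLike K]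
    (a : ℕ → GN K) (r : ℕ → ℝ) (hr : ∀ n, 0 < r n)
    (hdec : ∀ n,
      {x : GN K | sharpSemi (normFamily K) () (x - a (n + 1)) ≤ r (n + 1)} ⊆
      {x : GN K | sharpSemi (normFamily K) () (x - a n) ≤ r n}) :
    (⋂ n, {x : GN K | sharpSemi (normFamily K) () (x - a n) ≤ r n}).Nonempty :=
  iInter_sharpClosedBall_nonempty hr (antitone_nat_of_succ_le hdec)

end ColombeauPaper
end
end

section
/- Suppose the topology of E is generated by an increasing sequence of seminorms (p_n)_{n∈ℕ}. Then G_E is complete with respect to the sharp topology: every sequence (u_j)_{j∈ℕ} in G_E which is Cauchy for each ultra-pseudo-seminorm P_n (i.e., for every n and every r > 0 there is J with P_n(u_k − u_l) < r for all k, l ≥ J) converges in the sharp topology to some u ∈ G_E. -/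
open Filter Topology Asymptotics

noncomputable section

namespace ColombeauPaper

variable {ι κ : Type*} {E : Type*} [AddCommGroup E] [Module ℝ E]
  {F : Type*} [AddCommGroup F] [Module ℝ F]

/-! A Cauchy sequence has a subsequence `u (ψ j)` whose consecutive differences satisfy
`𝒫_n (u (ψ (j+1)) - u (ψ j)) < e^{-j}` for all `n ≤ j`; on representatives `W j` this gives
`p_n (W (j+1) ε - W j ε) ≤ ε^j` for `ε` below a threshold depending on `j`. Gluing the
representatives along these thresholds, `v ε := W (N ε) ε` with `N ε → ∞` as `ε → 0`, the
geometric series gives `p_n (W j ε - v ε) ≤ 2 ε^j`, so `v` is moderate and `u (ψ j) → [v]`;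
a Cauchy sequence with a convergent subsequence converges. -/

section Asymptotics

lemma isBigO_rpow_rpow_nhdsGT {a b : ℝ} (h : a ≤ b) :
    (fun ε : ℝ => ε ^ b) =O[𝓝[>] 0] fun ε => ε ^ a := by
  refine IsBigO.of_bound 1 ?_
  filter_upwards [Ioo_mem_nhdsGT one_pos] with ε hε
  rw [one_mul, Real.norm_of_nonneg (Real.rpow_nonneg hε.1.le _),
    Real.norm_of_nonneg (Real.rpow_nonneg hε.1.le _)]
  exact Real.rpow_le_rpow_of_exponent_ge hε.1 hε.2.le h

lemma isLittleO_rpow_rpow_nhdsGT {a b : ℝ} (h : a < b) :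
    (fun ε : ℝ => ε ^ b) =o[𝓝[>] 0] fun ε => ε ^ a := by
  have hpos : ∀ᶠ ε in 𝓝[>] (0 : ℝ), 0 < ε := self_mem_nhdsWithin
  rw [isLittleO_iff_tendsto' (hpos.mono fun ε hε h0 => absurd h0 (Real.rpow_pos_of_pos hε a).ne')]
  have hlim : Tendsto (fun ε : ℝ => ε ^ (b - a)) (𝓝[>] 0) (𝓝 0) :=
    ((Real.continuous_rpow_const (sub_pos.2 h).le).tendsto' 0 0
      (Real.zero_rpow (sub_pos.2 h).ne')).mono_left nhdsWithin_le_nhds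
  refine hlim.congr' (hpos.mono fun ε hε => ?_)
  rw [Real.rpow_sub hε]

end Asymptotics

section Diagonal

lemma exists_strictMono_forall_le_lt {d : ℕ → ℕ → ℕ → ℝ}
    (hd : ∀ n : ℕ, ∀ r : ℝ, 0 < r → ∃ J : ℕ, ∀ k l : ℕ, J ≤ k → J ≤ l → d n k l < r)
    {r : ℕ → ℝ} (hr : ∀ j, 0 < r j) :
    ∃ ψ : ℕ → ℕ, StrictMono ψ ∧
      ∀ j, ∀ n ≤ j, ∀ k l : ℕ, ψ j ≤ k → ψ j ≤ l → d n k l < r j := by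
  refine extraction_forall_of_eventually
    (P := fun j m => ∀ n ≤ j, ∀ k l : ℕ, m ≤ k → m ≤ l → d n k l < r j) fun j => ?_
  refine ((eventually_all_finite (Set.finite_Iic j)).2 fun n _ => ?_).mono fun m hm n hn => hm n hn
  obtain ⟨J, hJ⟩ := hd n (r j) (hr j)
  filter_upwards [eventually_ge_atTop J] with m hm k l hk hl
  exact hJ k l (hm.trans hk) (hm.trans hl)

lemma exists_tendsto_atTop_forall_lt_mem {α : Type*} {l : Filter α} {s : ℕ → Set α}
    (hs : ∀ j, s j ∈ l) (hexit : ∀ x, ∃ j, x ∉ s j) :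
    ∃ N : α → ℕ, Tendsto N l atTop ∧ ∀ x, ∀ i < N x, x ∈ s i := by
  classical
  set t : ℕ → Set α := fun j => ⋂ i ∈ Set.Iic j, s i
  have ht : ∀ x, ∃ j, x ∉ t j := fun x =>
    (hexit x).imp fun j hj hx => hj (Set.mem_iInter₂.1 hx j Set.self_mem_Iic)
  refine ⟨fun x => Nat.find (ht x), tendsto_atTop.2 fun j => ?_, fun x i hi => ?_⟩
  · filter_upwards [(biInter_mem (Set.finite_Iic j)).2 fun i _ => hs i] with x hx
    by_contra! hlt
    exact Nat.find_spec (ht x) (Set.mem_iInter₂.2 fun i hi =>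
      Set.mem_iInter₂.1 hx i (le_trans hi hlt.le))
  · exact Set.mem_iInter₂.1 (not_not.1 (Nat.find_min (ht x) hi)) i Set.self_mem_Iic

lemma exists_net_isBigO_sub_of_sub_succ_le (q : ℕ → Seminorm ℝ E) (w : ℕ → ℝ → E)
    (hw : ∀ j, ∀ᶠ ε in 𝓝[>] (0 : ℝ), ∀ n ≤ j, q n (w (j + 1) ε - w j ε) ≤ ε ^ j) :
    ∃ v : ℝ → E, ∀ j, ∀ n ≤ j,
      (fun ε => q n (w j ε - v ε)) =O[𝓝[>] (0 : ℝ)] fun ε => ε ^ (j : ℝ) := by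
  -- the cap `(j + 2)⁻¹` makes every `ε` leave some `s j`, and keeps `ε < 1 / 2` inside `s j`
  set s : ℕ → Set ℝ := fun j =>
    Set.Ioo 0 ((j + 2 : ℝ)⁻¹) ∩ {ε | ∀ n ≤ j, q n (w (j + 1) ε - w j ε) ≤ ε ^ j}
  have hexit : ∀ ε, ∃ j, ε ∉ s j := by
    intro ε
    rcases le_or_gt ε 0 with hε | hε
    · exact ⟨0, fun h => hε.not_gt h.1.1⟩
    obtain ⟨j, hj⟩ := exists_nat_gt ε⁻¹
    refine ⟨j, fun h => h.1.2.not_ge ?_⟩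
    rw [inv_le_comm₀ (by positivity) hε]
    linarith
  obtain ⟨N, hN, hmem⟩ := exists_tendsto_atTop_forall_lt_mem
    (fun j => inter_mem (Ioo_mem_nhdsGT (by positivity)) (hw j)) hexit
  refine ⟨fun ε => w (N ε) ε, fun j n hn => IsBigO.of_bound 2 ?_⟩
  filter_upwards [hN.eventually_gt_atTop j] with ε hj
  obtain ⟨⟨hε0, hεj⟩, -⟩ := hmem ε j hj
  have hε : ε < 1 / 2 := hεj.trans_le (by rw [one_div]; gcongr; linarith [j.cast_nonneg (α := ℝ)])
  rw [Real.norm_of_nonneg (apply_nonneg _ _), Real.norm_of_nonneg (by positivity),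
    Real.rpow_natCast]
  calc q n (w j ε - w (N ε) ε)
      = q n (∑ i ∈ Finset.Ico j (N ε), (w (i + 1) ε - w i ε)) := by
        rw [Finset.sum_Ico_sub (fun i => w i ε) hj.le, map_sub_rev]
    _ ≤ ∑ i ∈ Finset.Ico j (N ε), q n (w (i + 1) ε - w i ε) :=
        Finset.le_sum_of_subadditive _ (map_zero _).le (map_add_le_add _) _ _
    _ ≤ ∑ i ∈ Finset.Ico j (N ε), ε ^ i := Finset.sum_le_sum fun i hi =>
        (hmem ε i (Finset.mem_Ico.1 hi).2).2 n (hn.trans (Finset.mem_Ico.1 hi).1)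
    _ ≤ ε ^ j / (1 - ε) := geom_sum_Ico_le_of_lt_one hε0.le (by linarith)
    _ ≤ 2 * ε ^ j := by
        rw [div_le_iff₀ (by linarith)]
        nlinarith [pow_nonneg hε0.le j]

end Diagonal

section Sharp

variable (p : ι → Seminorm ℝ E)

lemma isModerate_iff_isBigO {v : ℝ → E} :
    IsModerate p v ↔ ∀ i, ∃ b : ℝ, (fun ε => p i (v ε)) =O[𝓝[>] (0 : ℝ)] fun ε => ε ^ b := by
  refine forall_congr' fun i => ⟨fun ⟨M, hM⟩ => ⟨-M, IsBigO.of_bound 1 ?_⟩, fun ⟨b, hb⟩ => ?_⟩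
  · filter_upwards [hM, self_mem_nhdsWithin] with ε hε (hε0 : 0 < ε)
    rw [one_mul, Real.norm_of_nonneg (apply_nonneg _ _),
      Real.norm_of_nonneg (Real.rpow_nonneg hε0.le _), ← Int.cast_natCast, ← Int.cast_neg,
      Real.rpow_intCast]
    exact hε
  · obtain ⟨M, hM⟩ := exists_nat_gt (-b)
    refine ⟨M, ?_⟩
    have hlt : -(M : ℝ) < b := by linarith
    filter_upwards [(hb.trans_isLittleO (isLittleO_rpow_rpow_nhdsGT hlt)).bound one_pos,
      self_mem_nhdsWithin] with ε hε (hε0 : 0 < ε)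
    rwa [one_mul, Real.norm_of_nonneg (apply_nonneg _ _),
      Real.norm_of_nonneg (Real.rpow_nonneg hε0.le _), ← Int.cast_natCast, ← Int.cast_neg,
      Real.rpow_intCast] at hε

lemma isModerate_of_isBigO_sub {v : ℝ → E}
    (h : ∀ i, ∃ (w : moderateGroup p) (b : ℝ),
      (fun ε => p i ((w : ℝ → E) ε - v ε)) =O[𝓝[>] (0 : ℝ)] fun ε => ε ^ b) :
    IsModerate p v := by
  refine (isModerate_iff_isBigO p).2 fun i => ?_
  obtain ⟨w, b, hwv⟩ := h i
  obtain ⟨a, hw⟩ := (isModerate_iff_isBigO p).1 w.2 i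
  refine ⟨min a b, (isBigO_of_le _ fun ε => ?_).trans
    ((hw.trans (isBigO_rpow_rpow_nhdsGT (min_le_left a b))).add
      (hwv.trans (isBigO_rpow_rpow_nhdsGT (min_le_right a b))))⟩
  rw [Real.norm_of_nonneg (apply_nonneg _ _),
    Real.norm_of_nonneg (add_nonneg (apply_nonneg _ _) (apply_nonneg _ _))]
  simpa using map_sub_le_add (p i) ((w : ℝ → E) ε) ((w : ℝ → E) ε - v ε)

lemma isBigO_of_mk_eq {i : ι} {w w' : moderateGroup p}
    (hww' : (QuotientAddGroup.mk w : Colombeau p) = QuotientAddGroup.mk w') {b : ℝ}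
    (h : (fun ε => p i ((w' : ℝ → E) ε)) =O[𝓝[>] (0 : ℝ)] fun ε => ε ^ b) :
    (fun ε => p i ((w : ℝ → E) ε)) =O[𝓝[>] (0 : ℝ)] fun ε => ε ^ b := by
  have hneg : IsNegligible p ((-w + w' : moderateGroup p) : ℝ → E) := QuotientAddGroup.eq.1 hww'
  have hdiff : (fun ε => p i (((-w + w' : moderateGroup p) : ℝ → E) ε))
      =O[𝓝[>] (0 : ℝ)] fun ε => ε ^ b := by
    refine (IsBigO.of_bound 1 ?_).trans (isBigO_rpow_rpow_nhdsGT (Nat.le_ceil b))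
    filter_upwards [hneg i ⌈b⌉₊, self_mem_nhdsWithin] with ε hε (hε0 : 0 < ε)
    rwa [one_mul, Real.norm_of_nonneg (apply_nonneg _ _),
      Real.norm_of_nonneg (Real.rpow_nonneg hε0.le _), Real.rpow_natCast]
  refine (isBigO_of_le _ fun ε => ?_).trans (h.add hdiff)
  rw [Real.norm_of_nonneg (apply_nonneg _ _),
    Real.norm_of_nonneg (add_nonneg (apply_nonneg _ _) (apply_nonneg _ _))]
  have hval : ((-w + w' : moderateGroup p) : ℝ → E) ε = -(w : ℝ → E) ε + (w' : ℝ → E) ε := rfl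
  simpa [hval] using map_sub_le_add (p i) ((w' : ℝ → E) ε) (-(w : ℝ → E) ε + (w' : ℝ → E) ε)

lemma sharpSemi_le_exp_neg {i : ι} {x : Colombeau p} {b : ℝ} (w : moderateGroup p)
    (hw : (QuotientAddGroup.mk w : Colombeau p) = x)
    (h : (fun ε => p i ((w : ℝ → E) ε)) =O[𝓝[>] (0 : ℝ)] fun ε => ε ^ b) :
    sharpSemi p i x ≤ Real.exp (-b) :=
  csInf_le ⟨0, by rintro _ ⟨b, w, -, rfl, -⟩; positivity⟩ ⟨b, w, hw, rfl, h⟩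

lemma exists_isBigO_of_sharpSemi_lt {i : ι} {x : Colombeau p} {r : ℝ}
    (hx : sharpSemi p i x < r) :
    ∃ (b : ℝ) (w : moderateGroup p), (QuotientAddGroup.mk w : Colombeau p) = x ∧
      Real.exp (-b) < r ∧ (fun ε => p i ((w : ℝ → E) ε)) =O[𝓝[>] (0 : ℝ)] fun ε => ε ^ b := by
  obtain ⟨w, rfl⟩ := QuotientAddGroup.mk_surjective x
  obtain ⟨b, hb⟩ := (isModerate_iff_isBigO p).1 w.2 i
  obtain ⟨_, ⟨b, w', hw', rfl, hO⟩, hlt⟩ :=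
    exists_lt_of_csInf_lt (by exact ⟨_, b, w, rfl, rfl, hb⟩) hx
  exact ⟨b, w', hw', hlt, hO⟩

lemma eventually_le_pow_of_sharpSemi_lt {i : ι} {x : Colombeau p} {j : ℕ}
    (hx : sharpSemi p i x < Real.exp (-j)) (w : moderateGroup p)
    (hw : (QuotientAddGroup.mk w : Colombeau p) = x) :
    ∀ᶠ ε in 𝓝[>] (0 : ℝ), p i ((w : ℝ → E) ε) ≤ ε ^ j := by
  obtain ⟨b, w', hw', hb, hO⟩ := exists_isBigO_of_sharpSemi_lt p hx
  have hjb : (j : ℝ) < b := by linarith [Real.exp_lt_exp.1 hb]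
  filter_upwards [((isBigO_of_mk_eq p (hw.trans hw'.symm) hO).trans_isLittleO
    (isLittleO_rpow_rpow_nhdsGT hjb)).bound one_pos, self_mem_nhdsWithin] with ε hε (hε0 : 0 < ε)
  rwa [one_mul, Real.norm_of_nonneg (apply_nonneg _ _),
    Real.norm_of_nonneg (Real.rpow_nonneg hε0.le _), Real.rpow_natCast] at hε

lemma sharpSemi_add_lt {i : ι} {x y : Colombeau p} {r : ℝ} (hx : sharpSemi p i x < r)
    (hy : sharpSemi p i y < r) : sharpSemi p i (x + y) < r := by
  obtain ⟨a, w, rfl, ha, hw⟩ := exists_isBigO_of_sharpSemi_lt p hx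
  obtain ⟨b, w', rfl, hb, hw'⟩ := exists_isBigO_of_sharpSemi_lt p hy
  refine (sharpSemi_le_exp_neg p (w + w') rfl ((isBigO_of_le _ fun ε => ?_).trans
    ((hw.trans (isBigO_rpow_rpow_nhdsGT (min_le_left a b))).add
      (hw'.trans (isBigO_rpow_rpow_nhdsGT (min_le_right a b)))))).trans_lt ?_
  · rw [Real.norm_of_nonneg (apply_nonneg _ _),
      Real.norm_of_nonneg (add_nonneg (apply_nonneg _ _) (apply_nonneg _ _))]
    exact map_add_le_add (p i) _ _
  · rcases min_choice a b with h | h <;> rwa [h]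

lemma tendsto_sharpTopology {α : Type*} {l : Filter α} {u : α → Colombeau p} {v : Colombeau p}
    (h : ∀ i, ∀ r : ℝ, 0 < r → ∀ᶠ k in l, sharpSemi p i (u k - v) < r) :
    Tendsto u l (@nhds _ (sharpTopology p) v) := by
  refine TopologicalSpace.tendsto_nhds_generateFrom_iff.2 ?_
  rintro _ ⟨x, i, r, hr, rfl⟩ (hv : sharpSemi p i (v - x) < r)
  filter_upwards [h i r hr] with k hk
  simpa using sharpSemi_add_lt p hk hv

end Sharp

theorem colombeau_complete_general
    {E : Type*} [AddCommGroup E] [Module ℝ E]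
    (p : ℕ → Seminorm ℝ E)
    (u : ℕ → Colombeau p)
    (hcauchy : ∀ n : ℕ, ∀ r : ℝ, 0 < r → ∃ J : ℕ, ∀ k l : ℕ, J ≤ k → J ≤ l →
      sharpSemi p n (u k - u l) < r) :
    ∃ v : Colombeau p, Filter.Tendsto u Filter.atTop (@nhds _ (sharpTopology p) v) := by
  obtain ⟨ψ, hψ, hψu⟩ := exists_strictMono_forall_le_lt hcauchy
    (r := fun j : ℕ => Real.exp (-j)) fun j => Real.exp_pos _
  choose W hW using fun j => QuotientAddGroup.mk_surjective (u (ψ j))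
  have hstep : ∀ j, ∀ᶠ ε in 𝓝[>] (0 : ℝ), ∀ n ≤ j,
      p n ((W (j + 1) : ℝ → E) ε - (W j : ℝ → E) ε) ≤ ε ^ j := fun j =>
    (eventually_all_finite (Set.finite_Iic j)).2 fun n hn =>
      eventually_le_pow_of_sharpSemi_lt p (hψu j n hn _ _ (hψ.monotone j.le_succ) le_rfl)
        (W (j + 1) - W j) (by rw [QuotientAddGroup.mk_sub, hW, hW])
  obtain ⟨v, hv⟩ := exists_net_isBigO_sub_of_sub_succ_le p (fun j => W j) hstep
  have hvmod : IsModerate p v := isModerate_of_isBigO_sub p fun n => ⟨W n, n, hv n n le_rfl⟩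
  refine ⟨QuotientAddGroup.mk ⟨v, hvmod⟩, tendsto_sharpTopology p fun n r hr => ?_⟩
  obtain ⟨j, hnj, hjr⟩ := ((eventually_ge_atTop n).and
    ((Real.tendsto_exp_neg_atTop_nhds_zero.comp tendsto_natCast_atTop_atTop).eventually
      (gt_mem_nhds hr))).exists
  have hlim : sharpSemi p n (u (ψ j) - QuotientAddGroup.mk ⟨v, hvmod⟩) < r :=
    (sharpSemi_le_exp_neg p (W j - ⟨v, hvmod⟩) (by rw [QuotientAddGroup.mk_sub, hW])
      (hv j n hnj)).trans_lt hjr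
  filter_upwards [eventually_ge_atTop (ψ j)] with k hk
  simpa using sharpSemi_add_lt p ((hψu j n hnj k (ψ j) hk le_rfl).trans hjr) hlim

/-- If the topology of `E` is generated by an increasing sequence of
seminorms `(p_n)`, then `𝒢_E` is complete for the sharp topology: every sequence which is
Cauchy for each ultra-pseudo-seminorm `𝒫_n` converges in the sharp topology. -/
theorem colombeau_complete
    {E : Type*} [AddCommGroup E] [Module ℝ E]
    (p : ℕ → Seminorm ℝ E) (hp : Monotone p)
    (u : ℕ → Colombeau p)
    (hcauchy : ∀ n : ℕ, ∀ r : ℝ, 0 < r → ∃ J : ℕ, ∀ k l : ℕ, J ≤ k → J ≤ l →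
      sharpSemi p n (u k - u l) < r) :
    ∃ v : Colombeau p, Filter.Tendsto u Filter.atTop (@nhds _ (sharpTopology p) v) :=
  colombeau_complete_general p u hcauchy

end ColombeauPaper
end
end
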